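/- Soundness of constraint inference: if ⊢ P : ξ |_X C is derivable and (σ, π) is a solution to the constraint set C, then the process P is typable with type ξσπ in the multiparty session typing system. -/
import Mathlib


/-- Sorts, possibly containing sort variables. -/
inductive ESort : Type where
  | bool | nat | int
  | svar (α : ℕ)
deriving DecidableEq

/-- Expressions of the multiparty session calculus. -/
inductive Expr : Type where
  | etrue | efalse
  | enat (n : ℕ)
  | eint (z : ℤ)
  | evar (x : ℕ)
  | eneg (e : Expr)
  | enot (e : Expr)
  | eor (e₁ e₂ : Expr)
  | eadd (e₁ e₂ : Expr)
  | echoice (e₁ e₂ : Expr)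

/-- Processes of the multiparty session calculus. -/
inductive Proc : Type where
  | inact
  | pvar (X : ℕ)
  | prec (X : ℕ) (P : Proc)
  | send (p : ℕ) (e : Expr) (P : Proc)
  | recv (p x : ℕ) (P : Proc)
  | psel (p l : ℕ) (P : Proc)
  | pbra (p : ℕ) (I : Finset ℕ) (f : ℕ → Proc)
  | pcond (e : Expr) (P Q : Proc)

/-- Local session types with `ESort` payloads. -/
inductive TType : Type where
  | tend
  | tvar (t : ℕ)
  | mu (t : ℕ) (T : TType)
  | out (p : ℕ) (S : ESort) (T : TType)
  | inp (p : ℕ) (S : ESort) (T : TType)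
  | sel (p : ℕ) (I : Finset ℕ) (f : ℕ → TType)
  | bra (p : ℕ) (I : Finset ℕ) (f : ℕ → TType)

/-- Subtyping constraints generated by constraint inference (cf. the shapes
of Lemma "possible constraints"): `end ⊑ ξ`, `ψ ⊑ ξ`, `p?⟨β⟩.ψ ⊑ ξ`,
`p!⟨β⟩.ψ ⊑ ξ`, `p&{lᵢ:ψᵢ} ⊑ ξ`, `p⊕{lᵢ:ψᵢ} ⊑ ξ`, and sort equalities. -/
inductive Constr : Type where
  | cend (ξ : ℕ)
  | cvar (ψ ξ : ℕ)
  | cin (p β ψ ξ : ℕ)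
  | cout (p β ψ ξ : ℕ)
  | cbra (p : ℕ) (I : Finset ℕ) (f : ℕ → ℕ) (ξ : ℕ)
  | csel (p : ℕ) (I : Finset ℕ) (f : ℕ → ℕ) (ξ : ℕ)
  | ceq (S S' : ESort)

/-- Constraint inference for expressions: `EInf Γ e α X C` corresponds to
the judgement `Γ ⊢ e : α |_X C`. -/
inductive EInf (Γ : ℕ → Option ℕ) : Expr → ℕ → Set ℕ → Set Constr → Prop
  | svar {x α : ℕ} : Γ x = some α → EInf Γ (.evar x) α ∅ ∅
  | etrue (α : ℕ) : EInf Γ .etrue α {α} {.ceq (.svar α) .bool}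
  | efalse (α : ℕ) : EInf Γ .efalse α {α} {.ceq (.svar α) .bool}
  | enat (n α : ℕ) : EInf Γ (.enat n) α {α} {.ceq (.svar α) .nat}
  | eint (z : ℤ) (α : ℕ) : EInf Γ (.eint z) α {α} {.ceq (.svar α) .int}
  | eneg {e : Expr} {α : ℕ} {X : Set ℕ} {C : Set Constr} :
      EInf Γ e α X C → EInf Γ (.eneg e) α X (C ∪ {.ceq (.svar α) .int})
  | enot {e : Expr} {α : ℕ} {X : Set ℕ} {C : Set Constr} :
      EInf Γ e α X C → EInf Γ (.enot e) α X (C ∪ {.ceq (.svar α) .bool})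
  | eor {e₁ e₂ : Expr} {α₁ α₂ β : ℕ} {X₁ X₂ : Set ℕ} {C₁ C₂ : Set Constr} :
      EInf Γ e₁ α₁ X₁ C₁ → EInf Γ e₂ α₂ X₂ C₂ →
      Disjoint X₁ X₂ → β ∉ X₁ ∪ X₂ →
      EInf Γ (.eor e₁ e₂) β (X₁ ∪ X₂ ∪ {β})
        (C₁ ∪ C₂ ∪ {.ceq (.svar α₁) .bool, .ceq (.svar α₂) .bool,
                    .ceq (.svar β) .bool})
  | eadd {e₁ e₂ : Expr} {α₁ α₂ β : ℕ} {X₁ X₂ : Set ℕ} {C₁ C₂ : Set Constr} :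
      EInf Γ e₁ α₁ X₁ C₁ → EInf Γ e₂ α₂ X₂ C₂ →
      Disjoint X₁ X₂ → β ∉ X₁ ∪ X₂ →
      EInf Γ (.eadd e₁ e₂) β (X₁ ∪ X₂ ∪ {β})
        (C₁ ∪ C₂ ∪ {.ceq (.svar α₁) (.svar β), .ceq (.svar α₂) (.svar β),
                    .ceq (.svar β) .int})
  | echoice {e₁ e₂ : Expr} {α₁ α₂ β : ℕ} {X₁ X₂ : Set ℕ} {C₁ C₂ : Set Constr} :
      EInf Γ e₁ α₁ X₁ C₁ → EInf Γ e₂ α₂ X₂ C₂ →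
      Disjoint X₁ X₂ → β ∉ X₁ ∪ X₂ →
      EInf Γ (.echoice e₁ e₂) β (X₁ ∪ X₂ ∪ {β})
        (C₁ ∪ C₂ ∪ {.ceq (.svar α₁) (.svar β), .ceq (.svar α₂) (.svar β)})

/-- Constraint inference for processes: `PInf Γv Γp P ξ X C` corresponds to
the judgement `Γ ⊢ P : ξ |_X C`, where `Γv` maps value variables to sort
variables and `Γp` maps process variables to type variables. -/
inductive PInf : (ℕ → Option ℕ) → (ℕ → Option ℕ) → Proc → ℕ → Set ℕ → Set Constr → Prop
  | inact {Γv Γp : ℕ → Option ℕ} (ξ : ℕ) :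
      PInf Γv Γp .inact ξ {ξ} {.cend ξ}
  | pvar {Γv Γp : ℕ → Option ℕ} {X ψ : ℕ} (ξ : ℕ) :
      Γp X = some ψ → PInf Γv Γp (.pvar X) ξ {ξ} {.cvar ψ ξ}
  | prec {Γv Γp : ℕ → Option ℕ} {X : ℕ} {P : Proc} {ξ : ℕ} {Xs : Set ℕ} {C : Set Constr} :
      PInf Γv (Function.update Γp X (some ξ)) P ξ Xs C →
      PInf Γv Γp (.prec X P) ξ Xs C
  | recv {Γv Γp : ℕ → Option ℕ} {p x : ℕ} {P : Proc} {ψ α ξ : ℕ}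
      {Xs : Set ℕ} {C : Set Constr} :
      PInf (Function.update Γv x (some α)) Γp P ψ Xs C →
      α ∉ Xs → ξ ∉ Xs → α ≠ ξ →
      PInf Γv Γp (.recv p x P) ξ (Xs ∪ {ξ, α}) (C ∪ {.cin p α ψ ξ})
  | send {Γv Γp : ℕ → Option ℕ} {p : ℕ} {e : Expr} {P : Proc} {ψ α ξ : ℕ}
      {X₁ X₂ : Set ℕ} {C₁ C₂ : Set Constr} :
      PInf Γv Γp P ψ X₁ C₁ → EInf Γv e α X₂ C₂ →
      Disjoint X₁ X₂ → ξ ∉ X₁ ∪ X₂ →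
      PInf Γv Γp (.send p e P) ξ (X₁ ∪ X₂ ∪ {ξ}) (C₁ ∪ C₂ ∪ {.cout p α ψ ξ})
  | pbra {Γv Γp : ℕ → Option ℕ} {p : ℕ} {I : Finset ℕ} {f : ℕ → Proc}
      {g : ℕ → ℕ} {ξ : ℕ} {Xs : ℕ → Set ℕ} {Cs : ℕ → Set Constr} :
      (∀ i ∈ I, PInf Γv Γp (f i) (g i) (Xs i) (Cs i)) →
      (∀ i ∈ I, ∀ j ∈ I, i ≠ j → Disjoint (Xs i) (Xs j)) →
      ξ ∉ ⋃ i ∈ I, Xs i →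
      PInf Γv Γp (.pbra p I f) ξ ((⋃ i ∈ I, Xs i) ∪ {ξ})
        ((⋃ i ∈ I, Cs i) ∪ {.cbra p I g ξ})
  | psel {Γv Γp : ℕ → Option ℕ} {p l : ℕ} {P : Proc} {ψ ξ : ℕ}
      {Xs : Set ℕ} {C : Set Constr} :
      PInf Γv Γp P ψ Xs C → ξ ∉ Xs →
      PInf Γv Γp (.psel p l P) ξ (Xs ∪ {ξ}) (C ∪ {.csel p {l} (fun _ => ψ) ξ})
  | pcond {Γv Γp : ℕ → Option ℕ} {e : Expr} {P Q : Proc} {ψ₁ ψ₂ α ξ : ℕ}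
      {X₁ X₂ X₃ : Set ℕ} {C₁ C₂ C₃ : Set Constr} :
      PInf Γv Γp P ψ₁ X₁ C₁ → PInf Γv Γp Q ψ₂ X₂ C₂ → EInf Γv e α X₃ C₃ →
      Disjoint X₁ X₂ → Disjoint X₁ X₃ → Disjoint X₂ X₃ →
      ξ ∉ X₁ ∪ X₂ ∪ X₃ →
      PInf Γv Γp (.pcond e P Q) ξ (X₁ ∪ X₂ ∪ X₃ ∪ {ξ})
        (C₁ ∪ C₂ ∪ C₃ ∪ {.cvar ψ₁ ξ, .cvar ψ₂ ξ, .ceq (.svar α) .bool})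

/-- Substitution of a recursion variable in a local type. -/
def TType.subst : TType → ℕ → TType → TType
  | .tend, _, _ => .tend
  | .tvar s, t, U => if s = t then U else .tvar s
  | .mu s T, t, U => if s = t then .mu s T else .mu s (T.subst t U)
  | .out p S T, t, U => .out p S (T.subst t U)
  | .inp p S T, t, U => .inp p S (T.subst t U)
  | .sel p I f, t, U => .sel p I (fun i => (f i).subst t U)
  | .bra p I f, t, U => .bra p I (fun i => (f i).subst t U)

/-- Unfolding of leading `μ` binders. -/
inductive TUnfolds : TType → TType → Prop
  | tend : TUnfolds .tend .tend
  | tvar (t : ℕ) : TUnfolds (.tvar t) (.tvar t)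
  | out (p : ℕ) (S : ESort) (T : TType) : TUnfolds (.out p S T) (.out p S T)
  | inp (p : ℕ) (S : ESort) (T : TType) : TUnfolds (.inp p S T) (.inp p S T)
  | sel (p : ℕ) (I : Finset ℕ) (f : ℕ → TType) : TUnfolds (.sel p I f) (.sel p I f)
  | bra (p : ℕ) (I : Finset ℕ) (f : ℕ → TType) : TUnfolds (.bra p I f) (.bra p I f)
  | mu {t : ℕ} {T U : TType} :
      TUnfolds (T.subst t (.mu t T)) U → TUnfolds (.mu t T) U

/-- Actions of the labelled transition system on types. -/
inductive TAct : Type where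
  | ain (p : ℕ) (S : ESort)
  | aout (p : ℕ) (S : ESort)
  | asel (p l : ℕ)
  | abra (p l : ℕ)

/-- Labelled transitions of type graphs. -/
inductive TTr : TType → TAct → TType → Prop
  | inp {T T' : TType} {p : ℕ} {S : ESort} :
      TUnfolds T (.inp p S T') → TTr T (.ain p S) T'
  | out {T T' : TType} {p : ℕ} {S : ESort} :
      TUnfolds T (.out p S T') → TTr T (.aout p S) T'
  | sel {T : TType} {p l : ℕ} {I : Finset ℕ} {f : ℕ → TType} :
      TUnfolds T (.sel p I f) → l ∈ I → TTr T (.asel p l) (f l)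
  | bra {T : TType} {p l : ℕ} {I : Finset ℕ} {f : ℕ → TType} :
      TUnfolds T (.bra p I f) → l ∈ I → TTr T (.abra p l) (f l)

/-- The `end` transition. -/
def TTrEnd (T : TType) : Prop := TUnfolds T .tend

/-- Type simulations (selection covariant, branching contravariant). -/
def IsSim (R : TType → TType → Prop) : Prop :=
  ∀ T₁ T₂, R T₁ T₂ →
    (TTrEnd T₁ → TTrEnd T₂) ∧
    (∀ p S T₁', TTr T₁ (.ain p S) T₁' →
      ∃ T₂', TTr T₂ (.ain p S) T₂' ∧ R T₁' T₂') ∧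
    (∀ p S T₁', TTr T₁ (.aout p S) T₁' →
      ∃ T₂', TTr T₂ (.aout p S) T₂' ∧ R T₁' T₂') ∧
    (∀ p l T₁', TTr T₁ (.asel p l) T₁' →
      ∃ T₂', TTr T₂ (.asel p l) T₂' ∧ R T₁' T₂') ∧
    (∀ p l T₂', TTr T₂ (.abra p l) T₂' →
      ∃ T₁', TTr T₁ (.abra p l) T₁' ∧ R T₁' T₂')

/-- Coinductive subtyping, characterised as the union of all type
simulations. -/
def Subt (T₁ T₂ : TType) : Prop := ∃ R, IsSim R ∧ R T₁ T₂

/-- Expression typing `Γ ⊢ e : S`. -/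
inductive ETyped (Γ : ℕ → Option ESort) : Expr → ESort → Prop
  | evar {x : ℕ} {S : ESort} : Γ x = some S → ETyped Γ (.evar x) S
  | etrue : ETyped Γ .etrue .bool
  | efalse : ETyped Γ .efalse .bool
  | enat (n : ℕ) : ETyped Γ (.enat n) .nat
  | eint (z : ℤ) : ETyped Γ (.eint z) .int
  | eneg {e : Expr} : ETyped Γ e .int → ETyped Γ (.eneg e) .int
  | enot {e : Expr} : ETyped Γ e .bool → ETyped Γ (.enot e) .bool
  | eor {e₁ e₂ : Expr} : ETyped Γ e₁ .bool → ETyped Γ e₂ .bool →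
      ETyped Γ (.eor e₁ e₂) .bool
  | eadd {e₁ e₂ : Expr} : ETyped Γ e₁ .int → ETyped Γ e₂ .int →
      ETyped Γ (.eadd e₁ e₂) .int
  | echoice {e₁ e₂ : Expr} {S : ESort} : ETyped Γ e₁ S → ETyped Γ e₂ S →
      ETyped Γ (.echoice e₁ e₂) S

/-- Process typing `Γ ⊢ P : T` (with subsumption `T-Sub`). -/
inductive Typed : (ℕ → Option ESort) → (ℕ → Option TType) → Proc → TType → Prop
  | sub {Γv Γp P T T'} : Typed Γv Γp P T → Subt T T' → Typed Γv Γp P T'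
  | inact {Γv Γp} : Typed Γv Γp .inact .tend
  | prec {Γv Γp X P T} :
      Typed Γv (Function.update Γp X (some T)) P T →
      Typed Γv Γp (.prec X P) T
  | pvar {Γv Γp X T} : Γp X = some T → Typed Γv Γp (.pvar X) T
  | recv {Γv Γp p x P S T} :
      Typed (Function.update Γv x (some S)) Γp P T →
      Typed Γv Γp (.recv p x P) (.inp p S T)
  | send {Γv Γp p e P S T} :
      Typed Γv Γp P T → ETyped Γv e S →
      Typed Γv Γp (.send p e P) (.out p S T)
  | pbra {Γv Γp p} {I : Finset ℕ} {f : ℕ → Proc} {g : ℕ → TType} :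
      (∀ i ∈ I, Typed Γv Γp (f i) (g i)) →
      Typed Γv Γp (.pbra p I f) (.bra p I g)
  | psel {Γv Γp p l P T} :
      Typed Γv Γp P T →
      Typed Γv Γp (.psel p l P) (.sel p {l} (fun _ => T))
  | pcond {Γv Γp e P Q T} :
      ETyped Γv e .bool → Typed Γv Γp P T → Typed Γv Γp Q T →
      Typed Γv Γp (.pcond e P Q) T

/-- Application of a sort substitution to a sort. -/
def ESort.app (π : ℕ → ESort) : ESort → ESort
  | .svar α => π α
  | .bool => .bool
  | .nat => .nat
  | .int => .int

/-- Application of a sort substitution to all payload sorts of a type. -/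
def TType.mapSort (π : ℕ → ESort) : TType → TType
  | .tend => .tend
  | .tvar t => .tvar t
  | .mu t T => .mu t (T.mapSort π)
  | .out p S T => .out p (S.app π) (T.mapSort π)
  | .inp p S T => .inp p (S.app π) (T.mapSort π)
  | .sel p I f => .sel p I (fun i => (f i).mapSort π)
  | .bra p I f => .bra p I (fun i => (f i).mapSort π)

/-- `ξσπ`: the result of applying the type substitution `σ` and then the
sort substitution `π` to the type variable `ξ`. -/
def solApp (σ : ℕ → TType) (π : ℕ → ESort) (ξ : ℕ) : TType :=
  (σ ξ).mapSort π

/-- `(σ, π)` solves a constraint. -/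
def Solves (σ : ℕ → TType) (π : ℕ → ESort) : Constr → Prop
  | .cend ξ => Subt .tend (solApp σ π ξ)
  | .cvar ψ ξ => Subt (solApp σ π ψ) (solApp σ π ξ)
  | .cin p β ψ ξ => Subt (.inp p (π β) (solApp σ π ψ)) (solApp σ π ξ)
  | .cout p β ψ ξ => Subt (.out p (π β) (solApp σ π ψ)) (solApp σ π ξ)
  | .cbra p I f ξ => Subt (.bra p I (fun i => solApp σ π (f i))) (solApp σ π ξ)
  | .csel p I f ξ => Subt (.sel p I (fun i => solApp σ π (f i))) (solApp σ π ξ)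
  | .ceq S S' => S.app π = S'.app π

section Aux

private def mapV (π : ℕ → ESort) (Γ : ℕ → Option ℕ) : ℕ → Option ESort :=
  fun x => (Γ x).map π

private def mapP (σ : ℕ → TType) (π : ℕ → ESort) (Γ : ℕ → Option ℕ) :
    ℕ → Option TType :=
  fun X => (Γ X).map (solApp σ π)

private lemma mapV_update (π : ℕ → ESort) (Γ : ℕ → Option ℕ) (x α : ℕ) :
    mapV π (Function.update Γ x (some α)) =
      Function.update (mapV π Γ) x (some (π α)) := by
  funext y
  by_cases h : y = x <;> simp [mapV, Function.update, h]

private lemma mapP_update (σ : ℕ → TType) (π : ℕ → ESort) (Γ : ℕ → Option ℕ)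
    (X ξ : ℕ) :
    mapP σ π (Function.update Γ X (some ξ)) =
      Function.update (mapP σ π Γ) X (some (solApp σ π ξ)) := by
  funext y
  by_cases h : y = X <;> simp [mapP, Function.update, h]

private lemma einf_sound {Γ : ℕ → Option ℕ} {e : Expr} {α : ℕ} {X : Set ℕ}
    {C : Set Constr} (h : EInf Γ e α X C) (σ : ℕ → TType) (π : ℕ → ESort)
    (hsol : ∀ c ∈ C, Solves σ π c) :
    ETyped (mapV π Γ) e (π α) := by
  induction h with
  | svar hx => exact ETyped.evar (by simp [mapV, hx])
  | etrue α =>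
      have := hsol _ rfl
      simp only [Solves, ESort.app] at this
      rw [this]; exact ETyped.etrue
  | efalse α =>
      have := hsol _ rfl
      simp only [Solves, ESort.app] at this
      rw [this]; exact ETyped.efalse
  | enat n α =>
      have := hsol _ rfl
      simp only [Solves, ESort.app] at this
      rw [this]; exact ETyped.enat n
  | eint z α =>
      have := hsol _ rfl
      simp only [Solves, ESort.app] at this
      rw [this]; exact ETyped.eint z
  | eneg _ ih =>
      have hα := hsol _ (Or.inr rfl)
      simp only [Solves, ESort.app] at hα
      have := ih (fun c hc => hsol c (Or.inl hc))
      rw [hα] at this ⊢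
      exact ETyped.eneg this
  | enot _ ih =>
      have hα := hsol _ (Or.inr rfl)
      simp only [Solves, ESort.app] at hα
      have := ih (fun c hc => hsol c (Or.inl hc))
      rw [hα] at this ⊢
      exact ETyped.enot this
  | eor _ _ _ _ ih₁ ih₂ =>
      have h₁ := hsol _ (Or.inr (Or.inl rfl))
      have h₂ := hsol _ (Or.inr (Or.inr (Or.inl rfl)))
      have h₃ := hsol _ (Or.inr (Or.inr (Or.inr rfl)))
      simp only [Solves, ESort.app] at h₁ h₂ h₃
      have t₁ := ih₁ (fun c hc => hsol c (Or.inl (Or.inl hc)))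
      have t₂ := ih₂ (fun c hc => hsol c (Or.inl (Or.inr hc)))
      rw [h₁] at t₁; rw [h₂] at t₂; rw [h₃]
      exact ETyped.eor t₁ t₂
  | eadd _ _ _ _ ih₁ ih₂ =>
      have h₁ := hsol _ (Or.inr (Or.inl rfl))
      have h₂ := hsol _ (Or.inr (Or.inr (Or.inl rfl)))
      have h₃ := hsol _ (Or.inr (Or.inr (Or.inr rfl)))
      simp only [Solves, ESort.app] at h₁ h₂ h₃
      have t₁ := ih₁ (fun c hc => hsol c (Or.inl (Or.inl hc)))
      have t₂ := ih₂ (fun c hc => hsol c (Or.inl (Or.inr hc)))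
      rw [h₁, h₃] at t₁; rw [h₂, h₃] at t₂; rw [h₃]
      exact ETyped.eadd t₁ t₂
  | echoice _ _ _ _ ih₁ ih₂ =>
      have h₁ := hsol _ (Or.inr (Or.inl rfl))
      have h₂ := hsol _ (Or.inr (Or.inr rfl))
      simp only [Solves, ESort.app] at h₁ h₂
      have t₁ := ih₁ (fun c hc => hsol c (Or.inl (Or.inl hc)))
      have t₂ := ih₂ (fun c hc => hsol c (Or.inl (Or.inr hc)))
      rw [h₁] at t₁; rw [h₂] at t₂
      exact ETyped.echoice t₁ t₂

private lemma pinf_sound {Γv Γp : ℕ → Option ℕ} {P : Proc} {ξ : ℕ}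
    {X : Set ℕ} {C : Set Constr} (h : PInf Γv Γp P ξ X C)
    (σ : ℕ → TType) (π : ℕ → ESort) (hsol : ∀ c ∈ C, Solves σ π c) :
    Typed (mapV π Γv) (mapP σ π Γp) P (solApp σ π ξ) := by
  induction h with
  | inact ξ =>
      exact Typed.sub Typed.inact (hsol _ rfl)
  | pvar ξ hX =>
      refine Typed.sub (Typed.pvar (T := solApp σ π _) ?_) (hsol _ rfl)
      simp [mapP, hX]
  | prec _ ih =>
      refine Typed.prec ?_
      rw [← mapP_update]
      exact ih hsol
  | recv _ _ _ _ ih =>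
      have hc := hsol _ (Or.inr rfl)
      refine Typed.sub (Typed.recv ?_) hc
      rw [← mapV_update]
      exact ih (fun c hc => hsol c (Or.inl hc))
  | send hP hE _ _ ih =>
      have hc := hsol _ (Or.inr rfl)
      refine Typed.sub (Typed.send ?_ ?_) hc
      · exact ih (fun c hc => hsol c (Or.inl (Or.inl hc)))
      · exact einf_sound hE σ π (fun c hc => hsol c (Or.inl (Or.inr hc)))
  | pbra hI _ _ ih =>
      have hc := hsol _ (Or.inr rfl)
      refine Typed.sub (Typed.pbra ?_) hc
      intro i hi
      exact ih i hi (fun c hc' => hsol c (Or.inl (Set.mem_biUnion hi hc')))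
  | psel _ _ ih =>
      have hc := hsol _ (Or.inr rfl)
      exact Typed.sub (Typed.psel (ih (fun c hc => hsol c (Or.inl hc)))) hc
  | pcond hP hQ hE _ _ _ _ ihP ihQ =>
      have h₁ := hsol _ (Or.inr (Or.inl rfl))
      have h₂ := hsol _ (Or.inr (Or.inr (Or.inl rfl)))
      have h₃ := hsol _ (Or.inr (Or.inr (Or.inr rfl)))
      simp only [Solves, ESort.app] at h₃
      have tE := einf_sound hE σ π
        (fun c hc => hsol c (Or.inl (Or.inr hc)))
      rw [h₃] at tE
      exact Typed.pcond tE
        (Typed.sub (ihP (fun c hc => hsol c (Or.inl (Or.inl (Or.inl hc))))) h₁)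
        (Typed.sub (ihQ (fun c hc => hsol c (Or.inl (Or.inl (Or.inr hc))))) h₂)

end Aux

/-- soundness of constraint inference: if
`⊢ P : ξ |_X C` is derivable and `(σ, π)` solves `C`, then `P` has type
`ξσπ`. -/
theorem constraints_sound (P : Proc) (ξ : ℕ) (X : Set ℕ) (C : Set Constr)
    (σ : ℕ → TType) (π : ℕ → ESort)
    (h : PInf (fun _ => none) (fun _ => none) P ξ X C)
    (hsol : ∀ c ∈ C, Solves σ π c) :
    Typed (fun _ => none) (fun _ => none) P (solApp σ π ξ) :=
  pinf_sound h σ π hsol
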